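/- arXiv:1311.6968 — 3 statements merged into one kernel-verified Lean document; each statement's English description precedes it below -/
import Mathlib

section
/- Let b = (b_1,…,b_n) ∈ 𝓑'. Then the quotient ring R_b = R/I_b has ℂ-dimension b_1 b_2 ⋯ b_n, and the classes of the monomials x_1^{j_1} x_2^{j_2} ⋯ x_n^{j_n} with 0 ≤ j_i < b_i for all i form a ℂ-basis of R_b. -/
/-!
Splitting off the last variable identifies `R_b` with `R_{b'}[x_n] / (h_{b_n}(x_1, …, x_n))`,
where `b' = (b_1, …, b_{n-1})`. The recursion `h_{j+1}(S ∪ {a}) = h_{j+1}(S) + x_a h_j(S ∪ {a})`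
shows that `h_{b_n}(x_1, …, x_n)` is monic of degree `b_n` in `x_n`, so `R_b` is free over `R_{b'}`
with basis `1, x_n, …, x_n^{b_n - 1}`, and induction on `n` gives the monomial basis.
-/

open MvPolynomial

/-- The complete homogeneous symmetric polynomial of degree `j` in the variables indexed
by the finite set `S`. -/
noncomputable def hset (n : ℕ) (S : Finset (Fin n)) (j : ℕ) : MvPolynomial (Fin n) ℂ :=
  ∑ μ ∈ Finset.univ.filter (fun μ : Sym (Fin n) j => ∀ i ∈ μ, i ∈ S),
    (μ.val.map MvPolynomial.X).prod

/-- The complete homogeneous symmetric polynomial `h_j(x_1, …, x_k)` of degree `j` in the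
first `k` variables (these are the 0-based indices `0, …, k-1`). -/
noncomputable def hfirst (n k j : ℕ) : MvPolynomial (Fin n) ℂ :=
  hset n (Finset.univ.filter (fun i : Fin n => (i : ℕ) < k)) j

/-- The ideal `I_b` generated by `h_{b_1}(x_1), h_{b_2}(x_1,x_2), …, h_{b_n}(x_1,…,x_n)`. -/
noncomputable def Ib {n : ℕ} (b : Fin n → ℕ) : Ideal (MvPolynomial (Fin n) ℂ) :=
  Ideal.span (Set.range fun i : Fin n => hfirst n ((i : ℕ) + 1) (b i))

/-- `b ∈ 𝓑'`: a sequence of positive integers with `b i ≥ b (i+1) ≥ b i - 1` for all `i`. -/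
def Bprime {n : ℕ} (b : Fin n → ℕ) : Prop :=
  (∀ i, 0 < b i) ∧ ∀ (i : ℕ) (h : i + 1 < n),
    b ⟨i + 1, h⟩ ≤ b ⟨i, Nat.lt_of_succ_lt h⟩ ∧
      b ⟨i, Nat.lt_of_succ_lt h⟩ ≤ b ⟨i + 1, h⟩ + 1

open Finset

namespace Finset

variable {ι : Type*} [DecidableEq ι]

theorem filter_finsuppAntidiag_insert_apply_eq_zero {a : ι} {S : Finset ι} (ha : a ∉ S)
    (j : ℕ) : {d ∈ (insert a S).finsuppAntidiag j | d a = 0} = S.finsuppAntidiag j := by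
  ext d
  simp only [mem_filter, mem_finsuppAntidiag, sum_insert ha]
  constructor
  · rintro ⟨⟨hsum, hsupp⟩, hda⟩
    refine ⟨by simpa [hda] using hsum, fun i hi => ?_⟩
    rcases mem_insert.mp (hsupp hi) with rfl | h
    · exact absurd hda (Finsupp.mem_support_iff.mp hi)
    · exact h
  · rintro ⟨hsum, hsupp⟩
    have hda : d a = 0 := Finsupp.notMem_support_iff.mp fun h => ha (hsupp h)
    exact ⟨⟨by simpa [hda] using hsum, hsupp.trans (subset_insert a S)⟩, hda⟩

theorem filter_finsuppAntidiag_apply_ne_zero {a : ι} {T : Finset ι} (ha : a ∈ T) (j : ℕ) :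
    {d ∈ T.finsuppAntidiag (j + 1) | d a ≠ 0} =
      (T.finsuppAntidiag j).map (addRightEmbedding (Finsupp.single a 1)) := by
  have sum_add_single (e : ι →₀ ℕ) :
      T.sum ⇑(e + Finsupp.single a 1 : ι →₀ ℕ) = T.sum ⇑e + 1 := by
    simp [sum_add_distrib, Finsupp.single_apply, ha]
  ext d
  simp only [mem_filter, mem_map, mem_finsuppAntidiag, addRightEmbedding_apply]
  constructor
  · rintro ⟨⟨hsum, hsupp⟩, hda⟩
    have hd : d - Finsupp.single a 1 + Finsupp.single a 1 = d :=
      tsub_add_cancel_of_le (Finsupp.single_le_iff.mpr (Nat.one_le_iff_ne_zero.mpr hda))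
    refine ⟨d - Finsupp.single a 1, ⟨?_, Finsupp.support_tsub.trans hsupp⟩, hd⟩
    have := sum_add_single (d - Finsupp.single a 1)
    rw [hd, hsum] at this
    omega
  · rintro ⟨e, ⟨hsum, hsupp⟩, rfl⟩
    refine ⟨⟨by rw [sum_add_single, hsum], ?_⟩, by simp⟩
    exact Finsupp.support_add.trans (union_subset hsupp (by simpa using ha))

end Finset

theorem MvPolynomial.prod_map_X_eq_monomial {σ R : Type*} [CommSemiring R] [DecidableEq σ]
    (μ : Multiset σ) : (μ.map (X (R := R))).prod = monomial (Multiset.toFinsupp μ) 1 := by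
  induction μ using Multiset.induction with
  | empty => simp
  | cons a s ih =>
    rw [Multiset.map_cons, Multiset.prod_cons, ih, ← Multiset.singleton_add, map_add,
      Multiset.toFinsupp_singleton, X, monomial_mul, one_mul]

theorem hset_eq_sum_monomial {n : ℕ} (S : Finset (Fin n)) (j : ℕ) :
    hset n S j = ∑ d ∈ S.finsuppAntidiag j, monomial d 1 := by
  have card_toMultiset {d : Fin n →₀ ℕ} (hd : d ∈ S.finsuppAntidiag j) :
      (Finsupp.toMultiset d).card = j := by
    rw [Finsupp.card_toMultiset, ← (mem_finsuppAntidiag'.mp hd).1]; rfl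
  refine sum_bij' (fun μ _ => Multiset.toFinsupp μ.val)
    (fun d hd => Sym.mk (Finsupp.toMultiset d) (card_toMultiset hd))
    (fun μ hμ => ?_) (fun d hd => ?_) (fun μ _ => Sym.ext (by simp)) (fun d _ => by simp)
    (fun μ _ => prod_map_X_eq_monomial μ.val)
  · rw [mem_filter] at hμ
    rw [mem_finsuppAntidiag]
    exact ⟨(Multiset.sum_count_eq_card hμ.2).trans μ.2, fun i hi => hμ.2 i (by simpa using hi)⟩
  · simp only [mem_filter, mem_univ, true_and]
    exact fun i hi => (mem_finsuppAntidiag'.mp hd).2 ((Finsupp.mem_toMultiset _ _).mp hi)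

theorem hset_zero {n : ℕ} (S : Finset (Fin n)) : hset n S 0 = 1 := by
  rw [hset_eq_sum_monomial, finsuppAntidiag_zero, sum_singleton, monomial_zero', C_1]

theorem hset_insert {n : ℕ} {a : Fin n} {S : Finset (Fin n)} (ha : a ∉ S) (j : ℕ) :
    hset n (insert a S) (j + 1) = hset n S (j + 1) + X a * hset n (insert a S) j := by
  simp only [hset_eq_sum_monomial, mul_sum, X, monomial_mul, one_mul]
  rw [← sum_filter_add_sum_filter_not _ (fun d => d a = 0),
    filter_finsuppAntidiag_insert_apply_eq_zero ha,
    filter_finsuppAntidiag_apply_ne_zero (mem_insert_self a S), sum_map]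
  simp [add_comm]

theorem rename_hset {n m : ℕ} {f : Fin n → Fin m} (hf : Function.Injective f)
    (S : Finset (Fin n)) (j : ℕ) : rename f (hset n S j) = hset m (S.image f) j := by
  simp only [hset_eq_sum_monomial, map_sum, rename_monomial]
  refine sum_nbij' (Finsupp.mapDomain f) (Finsupp.comapDomain f · hf.injOn)
    (fun d hd => ?_) (fun d hd => ?_) (fun d _ => Finsupp.comapDomain_mapDomain f hf d)
    (fun d hd => ?_) (fun _ _ => rfl)
  all_goals simp only [mem_finsuppAntidiag] at hd ⊢
  · rw [Finsupp.mapDomain_support_of_injective hf, sum_image fun x _ y _ h => hf h]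
    simp only [Finsupp.mapDomain_apply hf]
    exact ⟨hd.1, image_subset_image hd.2⟩
  · refine ⟨?_, fun x hx => ?_⟩
    · rw [← hd.1, sum_image fun x _ y _ h => hf h]
      rfl
    · have hfx : f x ∈ d.support := by rwa [Finsupp.comapDomain_support, mem_preimage] at hx
      obtain ⟨y, hy, hyx⟩ := mem_image.mp (hd.2 hfx)
      rwa [← hf hyx]
  · refine Finsupp.mapDomain_comapDomain f hf d fun y hy => ?_
    obtain ⟨x, -, rfl⟩ := mem_image.mp (hd.2 hy)
    exact Set.mem_range_self x

theorem hset_univ_succ_succ (n j : ℕ) :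
    hset (n + 1) univ (j + 1) =
      rename Fin.castSucc (hset n univ (j + 1)) + X (Fin.last n) * hset (n + 1) univ j := by
  have huniv : (univ : Finset (Fin (n + 1))) = insert (Fin.last n) (univ.image Fin.castSucc) := by
    ext i; cases i using Fin.lastCases <;> simp
  have hlast : Fin.last n ∉ univ.image Fin.castSucc := by simp
  rw [rename_hset (Fin.castSucc_injective n)]
  conv_lhs => rw [huniv]
  rw [hset_insert hlast, ← huniv]

theorem hfirst_castSucc {n k : ℕ} (hk : k ≤ n) (j : ℕ) :
    hfirst (n + 1) k j = rename Fin.castSucc (hfirst n k j) := by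
  rw [hfirst, hfirst, rename_hset (Fin.castSucc_injective n)]
  congr 1
  ext i
  simp only [mem_image, mem_filter, mem_univ, true_and]
  constructor
  · exact fun hi => ⟨⟨i, by omega⟩, hi, rfl⟩
  · rintro ⟨s, hs, rfl⟩
    exact hs

theorem hfirst_self (n j : ℕ) : hfirst n n j = hset n univ j := by
  rw [hfirst, filter_true_of_mem fun i _ => i.isLt]

namespace MvPolynomial

variable (R : Type*) [CommSemiring R] (n : ℕ)

noncomputable def finSuccLastEquiv :
    MvPolynomial (Fin (n + 1)) R ≃ₐ[R] Polynomial (MvPolynomial (Fin n) R) :=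
  (renameEquiv R finSuccEquivLast).trans (optionEquivLeft R (Fin n))

variable {R n}

@[simp]
theorem finSuccLastEquiv_X_castSucc (k : Fin n) :
    finSuccLastEquiv R n (X k.castSucc) = Polynomial.C (X k) := by
  simp [finSuccLastEquiv]

@[simp]
theorem finSuccLastEquiv_X_last : finSuccLastEquiv R n (X (Fin.last n)) = Polynomial.X := by
  simp [finSuccLastEquiv]

theorem finSuccLastEquiv_rename_castSucc (p : MvPolynomial (Fin n) R) :
    finSuccLastEquiv R n (rename Fin.castSucc p) = Polynomial.C p := by
  induction p using MvPolynomial.induction_on with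
  | C a => simp [finSuccLastEquiv]
  | add p q hp hq => simp only [map_add, hp, hq]
  | mul_X p k hp => simp only [map_mul, hp, rename_X, finSuccLastEquiv_X_castSucc]

theorem finSuccLastEquiv_monomial (j : Fin (n + 1) → ℕ) :
    finSuccLastEquiv R n (monomial (Finsupp.equivFunOnFinite.symm j) 1) =
      Polynomial.C (monomial (Finsupp.equivFunOnFinite.symm (Fin.init j)) 1) *
        Polynomial.X ^ j (Fin.last n) := by
  simp only [monomial_eq, C_1, one_mul, Finsupp.prod_fintype _ _ (fun _ => pow_zero _),
    Fin.prod_univ_castSucc]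
  simp [map_prod, Fin.init]

end MvPolynomial

theorem monic_finSuccLastEquiv_hset_univ (n j : ℕ) :
    (finSuccLastEquiv ℂ n (hset (n + 1) univ j)).Monic ∧
      (finSuccLastEquiv ℂ n (hset (n + 1) univ j)).natDegree = j := by
  induction j with
  | zero => simp [hset_zero]
  | succ j ih =>
    obtain ⟨hmonic, hdeg⟩ := ih
    rw [hset_univ_succ_succ, map_add, map_mul, finSuccLastEquiv_rename_castSucc,
      finSuccLastEquiv_X_last, add_comm]
    have hXdeg : (Polynomial.X * finSuccLastEquiv ℂ n (hset (n + 1) univ j)).natDegree = j + 1 := by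
      rw [Polynomial.natDegree_X_mul hmonic.ne_zero, hdeg]
    have hlt : (Polynomial.C (hset n univ (j + 1))).degree <
        (Polynomial.X * finSuccLastEquiv ℂ n (hset (n + 1) univ j)).degree :=
      Polynomial.degree_lt_degree (by rw [Polynomial.natDegree_C, hXdeg]; omega)
    exact ⟨(Polynomial.monic_X.mul hmonic).add_of_left hlt,
      by rw [Polynomial.natDegree_add_eq_left_of_degree_lt hlt, hXdeg]⟩

namespace Polynomial

open scoped Polynomial

variable {R A : Type*} [CommRing R] [CommRing A] [Algebra R A]

theorem ker_mk_comp_mapRingHom_mk (I : Ideal A) (f : A[X]) :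
    RingHom.ker ((AdjoinRoot.mk (f.map (Ideal.Quotient.mk I))).comp
      (mapRingHom (Ideal.Quotient.mk I))) = I.map C ⊔ Ideal.span {f} := by
  have hsurj : Function.Surjective (mapRingHom (Ideal.Quotient.mk I)) :=
    map_surjective _ Ideal.Quotient.mk_surjective
  rw [← RingHom.comap_ker]
  change Ideal.comap _ (RingHom.ker (Ideal.Quotient.mk _)) = _
  rw [Ideal.mk_ker, ← coe_mapRingHom, ← Set.image_singleton, ← Ideal.map_span,
    Ideal.comap_map_of_surjective' _ hsurj, ker_mapRingHom, Ideal.mk_ker, sup_comm]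

variable (R) in
noncomputable def quotientMapCSupSpanAlgEquiv (I : Ideal A) (f : A[X]) :
    (A[X] ⧸ (I.map C ⊔ Ideal.span {f} : Ideal A[X])) ≃ₐ[R]
      AdjoinRoot (f.map (Ideal.Quotient.mk I)) :=
  (Ideal.quotientEquivAlgOfEq R (ker_mk_comp_mapRingHom_mk I f).symm).trans
    (Ideal.quotientKerAlgEquivOfSurjective (f := (AdjoinRoot.mkₐ _).restrictScalars R |>.comp
      (mapAlgHom (Ideal.Quotient.mkₐ R I)))
      (AdjoinRoot.mk_surjective.comp (map_surjective _ Ideal.Quotient.mk_surjective)))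

theorem quotientMapCSupSpanAlgEquiv_mk (I : Ideal A) (f p : A[X]) :
    quotientMapCSupSpanAlgEquiv R I f (Ideal.Quotient.mk _ p) =
      AdjoinRoot.mk _ (p.map (Ideal.Quotient.mk I)) := rfl

theorem exists_basis_quotient_map_C_sup_span_monic [Nontrivial R] {ι : Type*} {I : Ideal A}
    (B : Module.Basis ι R (A ⧸ I)) (v : ι → A) (hv : ∀ i, B i = Ideal.Quotient.mk I (v i))
    {f : A[X]} (hf : f.Monic) {d : ℕ} (hd : f.natDegree = d) :
    ∃ B' : Module.Basis (Fin d × ι) R (A[X] ⧸ (I.map C ⊔ Ideal.span {f} : Ideal A[X])),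
      ∀ p, B' p = Ideal.Quotient.mk _ (C (v p.2) * X ^ (p.1 : ℕ)) := by
  rcases subsingleton_or_nontrivial (A ⧸ I) with hI | hI
  · have : IsEmpty ι := ⟨fun i => B.ne_zero i (Subsingleton.elim _ _)⟩
    have : Subsingleton (A[X] ⧸ (I.map C ⊔ Ideal.span {f} : Ideal A[X])) := by
      rw [Ideal.Quotient.subsingleton_iff] at hI ⊢
      rw [hI, Ideal.map_top, top_sup_eq]
    exact ⟨Module.Basis.empty _, isEmptyElim⟩
  let e := quotientMapCSupSpanAlgEquiv R I f
  let pb := AdjoinRoot.powerBasis' (hf.map (Ideal.Quotient.mk I))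
  have hdim : pb.dim = d := (hf.natDegree_map _).trans hd
  refine ⟨((B.smulTower' pb.basis).map e.symm.toLinearEquiv).reindex
    ((finCongr hdim).prodCongr (Equiv.refl ι)), fun ⟨k, i⟩ => ?_⟩
  rw [Module.Basis.reindex_apply, Module.Basis.map_apply, AlgEquiv.toLinearEquiv_apply,
    AlgEquiv.symm_apply_eq, Module.Basis.smulTower'_apply, PowerBasis.basis_eq_pow]
  simp only [Equiv.prodCongr_symm, Equiv.refl_symm, Equiv.prodCongr_apply, Equiv.coe_refl,
    Prod.map_apply, id_eq, hv, Algebra.smul_def, AdjoinRoot.algebraMap_eq, map_mul, map_pow, e,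
    quotientMapCSupSpanAlgEquiv_mk, map_C, AdjoinRoot.mk_C, map_X, AdjoinRoot.mk_X]
  rfl

end Polynomial

theorem map_finSuccLastEquiv_Ib {n : ℕ} (b : Fin (n + 1) → ℕ) :
    (Ib b).map (finSuccLastEquiv ℂ n) = (Ib fun k => b k.castSucc).map Polynomial.C ⊔
      Ideal.span {finSuccLastEquiv ℂ n (hset (n + 1) univ (b (Fin.last n)))} := by
  have hgens : (fun i : Fin (n + 1) => hfirst (n + 1) (i + 1) (b i)) =
      Fin.snoc (fun k : Fin n => rename Fin.castSucc (hfirst n (k + 1) (b k.castSucc)))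
        (hset (n + 1) univ (b (Fin.last n))) := by
    funext i
    cases i using Fin.lastCases with
    | last => simp [hfirst_self]
    | cast k => simp [hfirst_castSucc (Nat.succ_le_of_lt k.isLt)]
  rw [Ib, Ib, hgens, Fin.range_snoc, Ideal.map_span, Ideal.map_span, Set.image_insert_eq,
    Ideal.span_insert, sup_comm, ← Set.range_comp, ← Set.range_comp]
  congr 3
  funext k
  exact finSuccLastEquiv_rename_castSucc _

theorem exists_basis_monomial_Ib : ∀ {n : ℕ} (b : Fin n → ℕ),
    ∃ B : Module.Basis ((i : Fin n) → Fin (b i)) ℂ (MvPolynomial (Fin n) ℂ ⧸ Ib b),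
      ∀ j, B j = Ideal.Quotient.mk (Ib b)
        (monomial (Finsupp.equivFunOnFinite.symm fun i => (j i : ℕ)) 1)
  | 0, b => by
    have hIb : Ib b = ⊥ := by rw [Ib, Set.range_eq_empty, Ideal.span_empty]
    let e : ℂ ≃ₐ[ℂ] MvPolynomial (Fin 0) ℂ ⧸ Ib b := (isEmptyAlgEquiv ℂ (Fin 0)).symm.trans
      ((AlgEquiv.quotientBot ℂ _).symm.trans (Ideal.quotientEquivAlgOfEq ℂ hIb.symm))
    refine ⟨(Module.Basis.singleton _ ℂ).map e.toLinearEquiv, fun j => ?_⟩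
    rw [Module.Basis.map_apply, Module.Basis.singleton_apply, AlgEquiv.toLinearEquiv_apply,
      map_one, Subsingleton.elim (Finsupp.equivFunOnFinite.symm _) 0, monomial_zero', C_1, map_one]
  | n + 1, b => by
    obtain ⟨B', hB'⟩ := exists_basis_monomial_Ib fun k => b k.castSucc
    obtain ⟨hmonic, hdeg⟩ := monic_finSuccLastEquiv_hset_univ n (b (Fin.last n))
    obtain ⟨B, hB⟩ := Polynomial.exists_basis_quotient_map_C_sup_span_monic B' _ hB' hmonic hdeg
    let e := Ideal.quotientEquivAlg (Ib b) _ (finSuccLastEquiv ℂ n) (map_finSuccLastEquiv_Ib b).symm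
    refine ⟨(B.map e.symm.toLinearEquiv).reindex (Fin.snocEquiv fun i => Fin (b i)), fun j => ?_⟩
    rw [Module.Basis.reindex_apply, Module.Basis.map_apply, AlgEquiv.toLinearEquiv_apply,
      AlgEquiv.symm_apply_eq, hB]
    have he (p) : e (Ideal.Quotient.mk _ p) = Ideal.Quotient.mk _ (finSuccLastEquiv ℂ n p) := rfl
    rw [he, finSuccLastEquiv_monomial]
    rfl

theorem stmt3_general {n : ℕ} (b : Fin n → ℕ) :
    Module.finrank ℂ (MvPolynomial (Fin n) ℂ ⧸ Ib b) = ∏ i, b i ∧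
    ∃ B : Module.Basis ((i : Fin n) → Fin (b i)) ℂ (MvPolynomial (Fin n) ℂ ⧸ Ib b),
      ∀ j, B j = Ideal.Quotient.mk (Ib b)
        (monomial (Finsupp.equivFunOnFinite.symm fun i => (j i : ℕ)) 1) := by
  obtain ⟨B, hB⟩ := exists_basis_monomial_Ib b
  refine ⟨?_, B, hB⟩
  rw [Module.finrank_eq_card_basis B, Fintype.card_pi]
  simp only [Fintype.card_fin]

/-- For `b ∈ 𝓑'`, the quotient `R_b = R/I_b` has dimension `b_1 ⋯ b_n` over `ℂ`, with a
basis given by the classes of the monomials `x_1^{j_1} ⋯ x_n^{j_n}` with `0 ≤ j_i < b_i`. -/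
theorem stmt3 {n : ℕ} (b : Fin n → ℕ) (hb : Bprime b) :
    Module.finrank ℂ (MvPolynomial (Fin n) ℂ ⧸ Ib b) = ∏ i, b i ∧
    ∃ B : Module.Basis ((i : Fin n) → Fin (b i)) ℂ (MvPolynomial (Fin n) ℂ ⧸ Ib b),
      ∀ j, B j = Ideal.Quotient.mk (Ib b)
        (monomial (Finsupp.equivFunOnFinite.symm fun i => (j i : ℕ)) 1) :=
  stmt3_general b
end

section
/- Let b ∈ 𝓑'. For every index 1 ≤ i ≤ n and every integer a ≥ b_i, the complete homogeneous symmetric polynomial h_a(x_1,…,x_i) lies in the ideal I_b. -/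
open MvPolynomial

/-!
Splitting off the last variable gives the recursion
`h_{a+1}(x_1,…,x_{k+1}) = h_{a+1}(x_1,…,x_k) + x_{k+1} h_a(x_1,…,x_{k+1})`.
By induction on `a ≥ b_{k+1}` (starting from the generator `h_{b_{k+1}}(x_1,…,x_{k+1})`), the
second summand lies in `I_b`, and the first does by induction on `k`, since
`a + 1 ≥ b_{k+1} + 1 ≥ b_k`. For `k = 0` the first summand vanishes.
-/

lemma hset_succ_eq_erase_add {n : ℕ} {S : Finset (Fin n)} {y : Fin n} (hy : y ∈ S) (m : ℕ) :
    hset n S (m + 1) = hset n (S.erase y) (m + 1) + X y * hset n S m := by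
  unfold hset
  rw [← Finset.sum_filter_add_sum_filter_not _ (fun μ => y ∉ μ), Finset.filter_filter,
    Finset.mul_sum]
  congr 1
  · refine Finset.sum_congr (Finset.filter_congr fun μ _ => ?_) fun _ _ => rfl
    simp only [Finset.mem_erase]
    exact ⟨fun ⟨hS, hyμ⟩ i hi => ⟨fun he => hyμ (he ▸ hi), hS i hi⟩,
      fun h => ⟨fun i hi => (h i hi).2, fun hyμ => (h y hyμ).1 rfl⟩⟩
  -- the multisets containing `y` are exactly the `y ::ₛ ν`
  · refine (Finset.sum_bij (fun ν _ => y ::ₛ ν) ?_ ?_ ?_ ?_).symm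
    · intro ν hν
      simp only [Finset.mem_filter, Finset.mem_univ, true_and, not_not] at hν ⊢
      refine ⟨fun i hi => ?_, Sym.mem_cons_self y ν⟩
      rcases Sym.mem_cons.mp hi with rfl | h
      exacts [hy, hν i h]
    · exact fun ν₁ _ ν₂ _ h => (Sym.cons_inj_right y ν₁ ν₂).mp h
    · intro μ hμ
      simp only [Finset.mem_filter, Finset.mem_univ, true_and, not_not] at hμ
      refine ⟨μ.erase y hμ.2, ?_, Sym.cons_erase hμ.2⟩
      simp only [Finset.mem_filter, Finset.mem_univ, true_and]
      exact fun i hi => hμ.1 i (Multiset.mem_of_mem_erase hi)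
    · intro ν _
      change _ = ((y ::ₘ ν.val).map X).prod
      rw [Multiset.map_cons, Multiset.prod_cons]

lemma hfirst_zero_succ (n m : ℕ) : hfirst n 0 (m + 1) = 0 := by
  refine Finset.sum_eq_zero fun μ hμ => absurd hμ ?_
  obtain ⟨a, μ', rfl⟩ := Sym.exists_eq_cons_of_succ μ
  simp only [Finset.mem_filter, Finset.mem_univ, true_and, not_forall]
  exact ⟨a, Sym.mem_cons_self a μ', by simp⟩

lemma hfirst_succ_succ {n k : ℕ} (hk : k < n) (m : ℕ) :
    hfirst n (k + 1) (m + 1) = hfirst n k (m + 1) + X ⟨k, hk⟩ * hfirst n (k + 1) m := by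
  unfold hfirst
  rw [hset_succ_eq_erase_add (y := ⟨k, hk⟩) (by simp) m]
  congr 2
  ext i
  simp only [Finset.mem_erase, Finset.mem_filter, Finset.mem_univ, true_and, ne_eq, Fin.ext_iff]
  omega

lemma hfirst_succ_mem_of_le {n k : ℕ} (hk : k < n) {I : Ideal (MvPolynomial (Fin n) ℂ)}
    {c : ℕ} (hc : hfirst n (k + 1) c ∈ I) (hprev : ∀ a, c ≤ a → hfirst n k (a + 1) ∈ I)
    (a : ℕ) (ha : c ≤ a) : hfirst n (k + 1) a ∈ I := by
  induction a, ha using Nat.le_induction with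
  | base => exact hc
  | succ a ha ih =>
    rw [hfirst_succ_succ hk]
    exact add_mem (hprev a ha) (I.mul_mem_left _ ih)

lemma hfirst_mem_Ib {n : ℕ} (b : Fin n → ℕ) (k : ℕ) (hk : k < n) :
    hfirst n (k + 1) (b ⟨k, hk⟩) ∈ Ib b :=
  Ideal.subset_span ⟨⟨k, hk⟩, rfl⟩

/-- For `b ∈ 𝓑'`, `h_a(x_1,…,x_i) ∈ I_b` for every `a ≥ b_i`. -/
theorem stmt5 {n : ℕ} (b : Fin n → ℕ) (hb : Bprime b) (i : Fin n) (a : ℕ) (ha : b i ≤ a) :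
    hfirst n ((i : ℕ) + 1) a ∈ Ib b := by
  suffices H : ∀ k (hk : k < n) a, b ⟨k, hk⟩ ≤ a → hfirst n (k + 1) a ∈ Ib b from
    H i i.2 a ha
  intro k
  induction k with
  | zero =>
    intro hk
    refine hfirst_succ_mem_of_le hk (hfirst_mem_Ib b 0 hk) fun a _ => ?_
    rw [hfirst_zero_succ]
    exact zero_mem _
  | succ k ih =>
    intro hk
    refine hfirst_succ_mem_of_le hk (hfirst_mem_Ib b (k + 1) hk) fun c hc => ih (by omega) _ ?_
    have := (hb.2 k hk).2
    omega
end

section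
/- Fix integers n ≥ 1 and 0 ≤ k ≤ n. In R = ℂ[x_1,…,x_n], the ideal generated by all polynomials h_r(x_{i_1},…,x_{i_m}) for 1 ≤ i_1 < ⋯ < i_m ≤ n, where either 1 ≤ m ≤ n−k and r > k, or n−k+1 ≤ m ≤ n and r > n−m, equals the ideal generated by all polynomials h_{k+1}(x_{i_1},…,x_{i_m}) for 1 ≤ m ≤ n−k together with all polynomials h_{n−m+1}(x_{i_1},…,x_{i_m}) for n−k+1 ≤ m ≤ n (again over all 1 ≤ i_1 < ⋯ < i_m ≤ n). -/
open MvPolynomial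

lemma hset_eq_sym (n : ℕ) (S : Finset (Fin n)) (j : ℕ) :
    hset n S j = ∑ μ ∈ S.sym j, (μ.val.map MvPolynomial.X).prod := by
  unfold hset
  congr 1
  ext μ
  simp [Finset.mem_sym_iff]

lemma hset_empty (n : ℕ) (j : ℕ) (hj : 1 ≤ j) : hset n (∅ : Finset (Fin n)) j = 0 := by
  obtain ⟨j, rfl⟩ := Nat.exists_eq_add_of_le hj
  rw [hset_eq_sym]
  rw [show 1 + j = j + 1 by ring, Finset.sym_empty, Finset.sum_empty]

lemma hset_rec (n : ℕ) (S : Finset (Fin n)) (a : Fin n) (ha : a ∉ S) (j : ℕ) :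
    hset n (insert a S) (j + 1) =
      hset n S (j + 1) + MvPolynomial.X a * hset n (insert a S) j := by
  rw [hset_eq_sym, hset_eq_sym, hset_eq_sym]
  rw [← Finset.sum_filter_add_sum_filter_not ((insert a S).sym (j+1)) (fun μ => a ∈ μ)]
  rw [add_comm]
  congr 1
  · -- terms without a : equals sum over S.sym (j+1)
    apply Finset.sum_congr
    · ext μ
      simp only [Finset.mem_filter, Finset.mem_sym_iff, Finset.mem_insert]
      constructor
      · rintro ⟨h1, h2⟩ i hi
        rcases h1 i hi with h | h
        · exact absurd (h ▸ hi) h2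
        · exact h
      · intro h
        refine ⟨fun i hi => Or.inr (h i hi), fun hmem => ha (h a hmem)⟩
    · intro _ _; rfl
  · -- terms with a
    rw [Finset.mul_sum]
    refine Finset.sum_bij' (fun μ hμ => μ.erase a (Finset.mem_filter.mp hμ).2)
      (fun ν _ => a ::ₛ ν) ?_ ?_ ?_ ?_ ?_
    · intro μ hμ
      rw [Finset.mem_sym_iff]
      intro i hi
      exact Finset.mem_sym_iff.mp (Finset.mem_filter.mp hμ).1 i
        (Multiset.mem_of_mem_erase hi)
    · intro ν hν
      rw [Finset.mem_filter]
      refine ⟨Finset.mem_sym_iff.mpr ?_, Sym.mem_cons_self a ν⟩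
      intro i hi
      rcases Sym.mem_cons.mp hi with h | h
      · exact h ▸ Finset.mem_insert_self a S
      · exact Finset.mem_sym_iff.mp hν i h
    · intro μ hμ
      exact Sym.cons_erase _
    · intro ν hν
      exact Sym.erase_cons_head ν a
    · intro μ hμ
      have hm : a ∈ Subtype.val μ := (Finset.mem_filter.mp hμ).2
      conv_lhs => rw [← Multiset.cons_erase hm]
      rw [Multiset.map_cons, Multiset.prod_cons]
      rfl

def gens (n k : ℕ) : Set (MvPolynomial (Fin n) ℂ) :=
  {p : MvPolynomial (Fin n) ℂ |
    ∃ S : Finset (Fin n),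
      (1 ≤ S.card ∧ S.card ≤ n - k ∧ p = hset n S (k + 1)) ∨
      (n - k + 1 ≤ S.card ∧ p = hset n S (n - S.card + 1))}

lemma card_le_n (n : ℕ) (S : Finset (Fin n)) : S.card ≤ n := by
  simpa using Finset.card_le_univ S

lemma gen_mem (n k : ℕ) (hk : k ≤ n) (S : Finset (Fin n)) (h1 : 1 ≤ S.card) (r : ℕ)
    (hr : r = min k (n - S.card) + 1) : hset n S r ∈ Ideal.span (gens n k) := by
  have hcard : S.card ≤ n := card_le_n n S
  apply Ideal.subset_span
  rcases le_or_gt k (n - S.card) with h | h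
  · refine ⟨S, Or.inl ⟨h1, by omega, ?_⟩⟩
    rw [hr]
    congr 1
    omega
  · refine ⟨S, Or.inr ⟨by omega, ?_⟩⟩
    rw [hr]
    congr 1
    omega

lemma aux (n k : ℕ) (hk : k ≤ n) (r : ℕ) (hr : 1 ≤ r)
    (OIH : ∀ r' : ℕ, r' < r → ∀ T : Finset (Fin n), min k (n - T.card) < r' →
      hset n T r' ∈ Ideal.span (gens n k)) :
    ∀ S : Finset (Fin n), (n - S.card < r ∨ k + 2 ≤ r) →
      hset n S r ∈ Ideal.span (gens n k) := by
  intro S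
  induction S using Finset.strongInduction with
  | _ S IH =>
    intro hS
    rcases Finset.eq_empty_or_nonempty S with rfl | ⟨a, haS⟩
    · rw [hset_empty n r hr]; exact zero_mem _
    · have hcard : S.card ≤ n := card_le_n n S
      have h1 : 1 ≤ S.card := Finset.card_pos.mpr ⟨a, haS⟩
      have hmin : min k (n - S.card) < r := by omega
      by_cases hgen : r = min k (n - S.card) + 1
      · exact gen_mem n k hk S h1 r hgen
      · obtain ⟨r', rfl⟩ : ∃ r', r = r' + 1 := ⟨r - 1, by omega⟩
        have herase : (S.erase a).card = S.card - 1 := Finset.card_erase_of_mem haS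
        have hrec := hset_rec n (S.erase a) a (Finset.notMem_erase a S) r'
        rw [Finset.insert_erase haS] at hrec
        rw [hrec]
        apply add_mem
        · exact IH (S.erase a) (Finset.erase_ssubset haS) (by omega)
        · exact Ideal.mul_mem_left _ _ (OIH r' (by omega) S (by omega))

lemma main_mem (n k : ℕ) (hk : k ≤ n) :
    ∀ r, ∀ S : Finset (Fin n), min k (n - S.card) < r →
      hset n S r ∈ Ideal.span (gens n k) := by
  intro r
  induction r using Nat.strong_induction_on with
  | _ r OIH =>
    intro S hS
    have hr1 : 1 ≤ r := by omega
    have hcard : S.card ≤ n := card_le_n n S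
    by_cases h : n - S.card < r ∨ k + 2 ≤ r
    · exact aux n k hk r hr1 (fun r' h1 T h2 => OIH r' h1 T h2) S h
    · push_neg at h
      have hrk : r = k + 1 := by omega
      rcases Nat.eq_zero_or_pos S.card with h0 | h0
      · rw [Finset.card_eq_zero.mp h0, hset_empty n r hr1]; exact zero_mem _
      · exact Ideal.subset_span ⟨S, Or.inl ⟨h0, by omega, by rw [hrk]⟩⟩


/-- The ideal of `ℂ[x_1,…,x_n]` generated by all `h_r(x_{i_1},…,x_{i_m})` with either
`1 ≤ m ≤ n−k` and `r > k`, or `n−k+1 ≤ m ≤ n` and `r > n−m`, coincides with the ideal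
generated by the `h_{k+1}(x_{i_1},…,x_{i_m})` for `1 ≤ m ≤ n−k` together with the
`h_{n−m+1}(x_{i_1},…,x_{i_m})` for `n−k+1 ≤ m ≤ n` (over all subsets
`{i_1 < ⋯ < i_m}` of the variables). -/
theorem stmt17 (n k : ℕ) (hn : 1 ≤ n) (hk : k ≤ n) :
    Ideal.span {p : MvPolynomial (Fin n) ℂ |
        ∃ (S : Finset (Fin n)) (r : ℕ),
          ((1 ≤ S.card ∧ S.card ≤ n - k ∧ k < r) ∨
            (n - k + 1 ≤ S.card ∧ n - S.card < r)) ∧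
          p = hset n S r} =
      Ideal.span {p : MvPolynomial (Fin n) ℂ |
        ∃ S : Finset (Fin n),
          (1 ≤ S.card ∧ S.card ≤ n - k ∧ p = hset n S (k + 1)) ∨
          (n - k + 1 ≤ S.card ∧ p = hset n S (n - S.card + 1))} := by
  apply le_antisymm
  · rw [Ideal.span_le]
    rintro p ⟨S, r, hcond, rfl⟩
    have hcard : S.card ≤ n := card_le_n n S
    exact main_mem n k hk r S (by omega)
  · rw [Ideal.span_le]
    rintro p ⟨S, h⟩
    have hcard : S.card ≤ n := card_le_n n S
    apply Ideal.subset_span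
    rcases h with ⟨h1, h2, rfl⟩ | ⟨h1, rfl⟩
    · exact ⟨S, k + 1, Or.inl ⟨h1, h2, by omega⟩, rfl⟩
    · exact ⟨S, n - S.card + 1, Or.inr ⟨h1, by omega⟩, rfl⟩
end
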